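/- For p ≥ 2, if X is a real random variable with E[X] = 0 and E[|X|^p] < ∞, then there exists a constant C_p depending only on p such that the average X̄_N of N i.i.d. copies of X satisfies E[|X̄_N|^p] ≤ C_p N^{-p/2} E[|X|^p]. -/

import Mathlib

/-!
With `c = rpowRemainderConst p`, a second-order expansion of `|·| ^ p` gives
`|x + y| ^ p ≤ |x| ^ p + p |x| ^ (p - 2) x y + c (|x| ^ (p - 2) y ^ 2 + |y| ^ p)`
(Taylor's bound for `(1 + t) ^ p` on `[-1, 1]` when `|y| < |x|`, a crude bound otherwise).
Take `x` a partial sum `S_k` and `y` an independent centred summand: the first-order term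
integrates to zero, the second factorises, and Lyapunov's inequality bounds both factors by
`p`-th moments. Hence `a_k = E|S_k| ^ p` satisfies
`a_(k+1) ≤ a_k + c (a_k ^ (1 - 2/p) m ^ (2/p) + m)` with `m = E|X| ^ p`, and Bernoulli's
inequality propagates `a_k ≤ (2 c k) ^ (p/2) m`. Dividing by `N ^ p` gives `C = (2 c) ^ (p/2)`.
-/

open MeasureTheory ProbabilityTheory Set Finset

lemma one_add_rpow_le {p t : ℝ} (hp : 2 ≤ p) (ht : t ∈ Icc (-1 : ℝ) 1) :
    (1 + t) ^ p ≤ 1 + p * t + p * (p - 1) * 2 ^ (p - 2) * t ^ 2 := by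
  set D := p * (p - 1) * 2 ^ (p - 2)
  set h : ℝ → ℝ := fun t => 1 + p * t + D * t ^ 2 - (1 + t) ^ p
  set h' : ℝ → ℝ := fun t => p + 2 * D * t - p * (1 + t) ^ (p - 1)
  have hh' : ∀ s ∈ Ioo (-1 : ℝ) 1, HasDerivAt h (h' s) s := by
    intro s hs
    have := ((hasDerivAt_id' s).const_add 1).rpow_const (p := p) (Or.inl (by linarith [hs.1]))
    refine ((((hasDerivAt_id' s).const_mul p).const_add 1).add
      ((hasDerivAt_pow 2 s).const_mul D) |>.sub this).congr_deriv ?_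
    simp only [h']; ring
  have hh'' : ∀ s ∈ Ioo (-1 : ℝ) 1,
      HasDerivAt h' (p * (p - 1) * (2 * 2 ^ (p - 2) - (1 + s) ^ (p - 2))) s := by
    intro s hs
    have := ((hasDerivAt_id' s).const_add 1).rpow_const (p := p - 1) (Or.inl (by linarith [hs.1]))
    refine ((((hasDerivAt_id' s).const_mul (2 * D)).const_add p).sub
      (this.const_mul p)).congr_deriv ?_
    rw [show p - 1 - 1 = p - 2 by ring]; ring
  have hconv : ConvexOn ℝ (Icc (-1) 1) h := by
    refine convexOn_of_hasDerivWithinAt2_nonneg (convex_Icc _ _) ?_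
      (fun s hs => (hh' s (by simpa using hs)).hasDerivWithinAt)
      (fun s hs => (hh'' s (by simpa using hs)).hasDerivWithinAt) fun s hs => ?_
    · have : Continuous fun t : ℝ => (1 + t) ^ p :=
        (continuous_const.add continuous_id).rpow_const fun _ => Or.inr (by linarith)
      exact (by fun_prop : Continuous h).continuousOn
    · rw [interior_Icc] at hs
      have : (1 + s) ^ (p - 2) ≤ 2 ^ (p - 2) :=
        Real.rpow_le_rpow (by linarith [hs.1]) (by linarith [hs.2]) (by linarith)
      have : (0 : ℝ) ≤ 2 ^ (p - 2) := by positivity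
      exact mul_nonneg (by nlinarith) (by linarith)
  have hcrit : derivWithin h (Ioi 0) 0 = 0 := by
    rw [(hh' 0 (by norm_num)).hasDerivWithinAt.derivWithin (uniqueDiffWithinAt_Ioi 0)]
    simp [h']
  have h0 : h 0 = 0 := by simp [h]
  have hmin : 0 ≤ h t := h0 ▸ hconv.isMinOn_of_rightDeriv_eq_zero (by simp) hcrit ht
  exact sub_nonneg.mp hmin

noncomputable def rpowRemainderConst (p : ℝ) : ℝ := p * (p - 1) * 2 ^ (p - 2) + 2 ^ p + p

lemma one_le_rpowRemainderConst {p : ℝ} (hp : 2 ≤ p) : 1 ≤ rpowRemainderConst p := by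
  have h2p : (1 : ℝ) ≤ 2 ^ p := Real.one_le_rpow one_le_two (by linarith)
  have hD : 0 ≤ p * (p - 1) * 2 ^ (p - 2) := mul_nonneg (by nlinarith) (by positivity)
  unfold rpowRemainderConst
  linarith

lemma abs_rpow_sub_two_mul_sq {p : ℝ} (hp : p ≠ 0) (x : ℝ) :
    |x| ^ (p - 2) * x ^ 2 = |x| ^ p := by
  rw [← sq_abs, ← Real.rpow_natCast, ← Real.rpow_add' (abs_nonneg x) (by simpa using hp)]
  norm_num

lemma abs_add_rpow_le_of_abs_le {p x y : ℝ} (hp : 2 ≤ p) (hxy : |x| ≤ |y|) :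
    |x + y| ^ p ≤ |x| ^ p + p * (|x| ^ (p - 2) * x * y) + (2 ^ p + p) * |y| ^ p := by
  have hp0 : 0 < p := by linarith
  have hsum : |x + y| ^ p ≤ 2 ^ p * |y| ^ p := by
    rw [← Real.mul_rpow zero_le_two (abs_nonneg y)]
    exact Real.rpow_le_rpow (abs_nonneg _) (by linarith [abs_add_le x y]) hp0.le
  have hlin : |p * (|x| ^ (p - 2) * x * y)| ≤ p * |y| ^ p :=
    calc |p * (|x| ^ (p - 2) * x * y)| = p * (|x| ^ (p - 2) * |x| * |y|) := by
          rw [abs_mul, abs_mul, abs_mul, abs_of_pos hp0, abs_of_nonneg (by positivity)]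
      _ ≤ p * (|y| ^ (p - 2) * |y| * |y|) := by gcongr
      _ = p * |y| ^ p := by rw [← abs_rpow_sub_two_mul_sq hp0.ne' y, ← sq_abs y]; ring
  have : 0 ≤ |x| ^ p := by positivity
  linarith [neg_abs_le (p * (|x| ^ (p - 2) * x * y))]

lemma abs_add_rpow_le_of_abs_lt {p x y : ℝ} (hp : 2 ≤ p) (hxy : |y| < |x|) :
    |x + y| ^ p ≤ |x| ^ p + p * (|x| ^ (p - 2) * x * y) +
      p * (p - 1) * 2 ^ (p - 2) * (|x| ^ (p - 2) * y ^ 2) := by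
  have hx : x ≠ 0 := abs_pos.mp ((abs_nonneg y).trans_lt hxy)
  have ht : |y / x| < 1 := by rwa [abs_div, div_lt_one (abs_pos.mpr hx)]
  have h1t : 0 ≤ 1 + y / x := by linarith [(abs_lt.mp ht).1]
  calc |x + y| ^ p = |x| ^ p * (1 + y / x) ^ p := by
        rw [show x + y = x * (1 + y / x) by field_simp, abs_mul, abs_of_nonneg h1t,
          Real.mul_rpow (abs_nonneg x) h1t]
    _ ≤ |x| ^ p * (1 + p * (y / x) + p * (p - 1) * 2 ^ (p - 2) * (y / x) ^ 2) := by
        gcongr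
        exact one_add_rpow_le hp ⟨(abs_lt.mp ht).1.le, (abs_lt.mp ht).2.le⟩
    _ = _ := by
        rw [← abs_rpow_sub_two_mul_sq (by linarith : p ≠ 0) x]
        field_simp

lemma abs_add_rpow_le {p : ℝ} (hp : 2 ≤ p) (x y : ℝ) :
    |x + y| ^ p ≤ |x| ^ p + p * (|x| ^ (p - 2) * x * y) +
      rpowRemainderConst p * (|x| ^ (p - 2) * y ^ 2 + |y| ^ p) := by
  have hD : 0 ≤ p * (p - 1) * 2 ^ (p - 2) := mul_nonneg (by nlinarith) (by positivity)
  have h2p : 0 ≤ 2 ^ p + p := by positivity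
  have hquad : 0 ≤ |x| ^ (p - 2) * y ^ 2 := by positivity
  have hy : 0 ≤ |y| ^ p := by positivity
  have hconst : rpowRemainderConst p * (|x| ^ (p - 2) * y ^ 2 + |y| ^ p) =
      p * (p - 1) * 2 ^ (p - 2) * (|x| ^ (p - 2) * y ^ 2) + (2 ^ p + p) * |y| ^ p +
        (p * (p - 1) * 2 ^ (p - 2) * |y| ^ p + (2 ^ p + p) * (|x| ^ (p - 2) * y ^ 2)) := by
    unfold rpowRemainderConst; ring
  rw [hconst]
  rcases le_or_gt |x| |y| with hxy | hxy
  · linarith [abs_add_rpow_le_of_abs_le hp hxy, mul_nonneg hD hquad, mul_nonneg hD hy,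
      mul_nonneg h2p hquad]
  · linarith [abs_add_rpow_le_of_abs_lt hp hxy, mul_nonneg hD hy, mul_nonneg h2p hy,
      mul_nonneg h2p hquad]

lemma rpow_add_mul_rpow_sub_one_le_add_rpow {r u v : ℝ} (hr : 1 ≤ r) (hu : 0 < u)
    (hv : 0 ≤ v) :
    u ^ r + r * u ^ (r - 1) * v ≤ (u + v) ^ r := by
  have hbern : 1 + r * (v / u) ≤ (1 + v / u) ^ r :=
    one_add_mul_self_le_rpow_one_add (by linarith [div_nonneg hv hu.le]) hr
  calc u ^ r + r * u ^ (r - 1) * v = u ^ r * (1 + r * (v / u)) := by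
        rw [Real.rpow_sub_one hu.ne']; field_simp
    _ ≤ u ^ r * (1 + v / u) ^ r := by gcongr
    _ = (u + v) ^ r := by
        rw [← Real.mul_rpow hu.le (by positivity)]; congr 1; field_simp

lemma rpow_two_mul_mul_add_le_succ {r c : ℝ} (hr : 1 ≤ r) (hc : 1 ≤ c) (k : ℕ) :
    (2 * c * k) ^ r + c * (2 * c * k) ^ (r - 1) + c ≤ (2 * c * (k + 1)) ^ r := by
  rcases k.eq_zero_or_pos with rfl | hk
  · have h0 : (0 : ℝ) ^ (r - 1) ≤ 1 := Real.zero_rpow_le_one _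
    have h2c : 2 * c ≤ (2 * c) ^ r := Real.self_le_rpow_of_one_le (by linarith) hr
    simp only [CharP.cast_eq_zero, mul_zero, zero_add, mul_one,
      Real.zero_rpow (by linarith : r ≠ 0)]
    nlinarith
  · have hu : 1 ≤ 2 * c * k := by
      have : (1 : ℝ) ≤ k := by exact_mod_cast hk
      nlinarith
    have hpow : 1 ≤ (2 * c * k) ^ (r - 1) := Real.one_le_rpow hu (by linarith)
    have htangent := rpow_add_mul_rpow_sub_one_le_add_rpow (u := 2 * c * k) (v := 2 * c) hr
      (by linarith) (by linarith)
    rw [show 2 * c * ((k : ℝ) + 1) = 2 * c * k + 2 * c by ring]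
    nlinarith [mul_nonneg (sub_nonneg.mpr hr) (by positivity : 0 ≤ c * (2 * c * k) ^ (r - 1)),
      mul_nonneg (by linarith : 0 ≤ c) (sub_nonneg.mpr hpow)]

lemma moment_bound_succ {p c a b m : ℝ} {k : ℕ} (hp : 2 ≤ p) (hc : 1 ≤ c) (ha0 : 0 ≤ a)
    (ha : a ≤ (2 * c * k) ^ (p / 2) * m) (hb0 : 0 ≤ b) (hbm : b ≤ m) :
    a + c * (a ^ ((p - 2) / p) * b ^ (2 / p) + b) ≤ (2 * c * (k + 1)) ^ (p / 2) * m := by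
  have hp0 : 0 < p := by linarith
  have hm : 0 ≤ m := hb0.trans hbm
  have hu : 0 ≤ 2 * c * k := by positivity
  have hcross : a ^ ((p - 2) / p) * b ^ (2 / p) ≤ (2 * c * k) ^ (p / 2 - 1) * m := by
    have hexp : (p - 2) / p + 2 / p = 1 := by rw [← add_div, sub_add_cancel, div_self hp0.ne']
    have hsplit : m ^ ((p - 2) / p) * m ^ (2 / p) = m := by
      rw [← Real.rpow_add' hm (by rw [hexp]; exact one_ne_zero), hexp, Real.rpow_one]
    calc a ^ ((p - 2) / p) * b ^ (2 / p)
        ≤ ((2 * c * k) ^ (p / 2) * m) ^ ((p - 2) / p) * m ^ (2 / p) := by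
          gcongr
      _ = (2 * c * k) ^ (p / 2 - 1) * m := by
          rw [Real.mul_rpow (by positivity) hm, ← Real.rpow_mul hu, mul_assoc, hsplit]
          congr 2; field_simp
  calc a + c * (a ^ ((p - 2) / p) * b ^ (2 / p) + b)
      ≤ (2 * c * k) ^ (p / 2) * m + c * ((2 * c * k) ^ (p / 2 - 1) * m + m) := by gcongr
    _ = ((2 * c * k) ^ (p / 2) + c * (2 * c * k) ^ (p / 2 - 1) + c) * m := by ring
    _ ≤ (2 * c * (k + 1)) ^ (p / 2) * m := by
        gcongr
        exact rpow_two_mul_mul_add_le_succ (by linarith) hc k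

section
variable {Ω : Type*} [MeasurableSpace Ω] {μ : Measure Ω} {p r : ℝ} {f : Ω → ℝ}

lemma MeasureTheory.MemLp.integrable_abs_rpow [IsFiniteMeasure μ]
    (hf : MemLp f (ENNReal.ofReal p) μ) (hr : 0 ≤ r) (hrp : r ≤ p) :
    Integrable (fun ω => |f ω| ^ r) μ := by
  simpa [ENNReal.toReal_ofReal hr] using
    (hf.mono_exponent (ENNReal.ofReal_le_ofReal hrp)).integrable_norm_rpow'

lemma MeasureTheory.MemLp.integrable_abs_rpow_sub_two_mul [IsFiniteMeasure μ] (hp : 2 ≤ p)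
    (hf : MemLp f (ENNReal.ofReal p) μ) : Integrable (fun ω => |f ω| ^ (p - 2) * f ω) μ := by
  refine (hf.integrable_abs_rpow (r := p - 1) (by linarith) (by linarith)).mono'
    ((by fun_prop : Measurable fun x : ℝ => |x| ^ (p - 2) * x).comp_aemeasurable
      hf.1.aemeasurable).aestronglyMeasurable (ae_of_all _ fun ω => ?_)
  rw [Real.norm_eq_abs, abs_mul, abs_of_nonneg (by positivity),
    ← Real.rpow_add_one' (abs_nonneg _) (by linarith), show p - 2 + 1 = p - 1 by ring]

variable [IsProbabilityMeasure μ]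

lemma integral_abs_rpow_le_integral_abs_rpow_rpow (hf : MemLp f (ENNReal.ofReal p) μ)
    (hr : 0 ≤ r) (hrp : r ≤ p) :
    ∫ ω, |f ω| ^ r ∂μ ≤ (∫ ω, |f ω| ^ p ∂μ) ^ (r / p) := by
  rcases (hr.trans hrp).eq_or_lt with rfl | hp
  · simp [le_antisymm hrp hr]
  have hrp' : r / p ≤ 1 := (div_le_one hp).mpr hrp
  have hpow : ∀ ω, |f ω| ^ r = (|f ω| ^ p) ^ (r / p) := fun ω => by
    rw [← Real.rpow_mul (abs_nonneg _), mul_div_cancel₀ _ hp.ne']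
  simp_rw [hpow]
  refine (Real.concaveOn_rpow (by positivity) hrp').le_map_integral ?_ isClosed_Ici
    (ae_of_all _ fun ω => ?_) (hf.integrable_abs_rpow hp.le le_rfl) ?_
  · exact (Real.continuous_rpow_const (by positivity)).continuousOn
  · exact Real.rpow_nonneg (abs_nonneg _) p
  · simpa only [Function.comp_def, ← hpow] using hf.integrable_abs_rpow hr hrp

lemma integral_abs_add_rpow_le_of_indepFun (hp : 2 ≤ p) {A Y : Ω → ℝ}
    (hA : MemLp A (ENNReal.ofReal p) μ) (hY : MemLp Y (ENNReal.ofReal p) μ)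
    (hAY : IndepFun A Y μ) (hY0 : ∫ ω, Y ω ∂μ = 0) :
    ∫ ω, |A ω + Y ω| ^ p ∂μ ≤ ∫ ω, |A ω| ^ p ∂μ + rpowRemainderConst p *
      ((∫ ω, |A ω| ^ (p - 2) ∂μ) * (∫ ω, Y ω ^ 2 ∂μ) + ∫ ω, |Y ω| ^ p ∂μ) := by
  have hφ : Measurable fun x : ℝ => |x| ^ (p - 2) * x := by fun_prop
  have hψ : Measurable fun x : ℝ => |x| ^ (p - 2) := by fun_prop
  have hφA := hA.integrable_abs_rpow_sub_two_mul hp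
  have hY1 : Integrable Y μ := hY.integrable (by simpa using hp.trans' one_le_two)
  have hY2 : Integrable (fun ω => Y ω ^ 2) μ := by
    simpa only [Real.rpow_two, sq_abs] using hY.integrable_abs_rpow (r := 2) zero_le_two hp
  have hlin : ∫ ω, |A ω| ^ (p - 2) * A ω * Y ω ∂μ = 0 := by
    have := (hAY.comp hφ measurable_id).integral_mul_eq_mul_integral
      hφA.aestronglyMeasurable hY1.aestronglyMeasurable
    simpa [hY0] using this
  have hquad : ∫ ω, |A ω| ^ (p - 2) * Y ω ^ 2 ∂μ =
      (∫ ω, |A ω| ^ (p - 2) ∂μ) * ∫ ω, Y ω ^ 2 ∂μ :=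
    (hAY.comp hψ (measurable_id.pow_const 2)).integral_mul_eq_mul_integral
      (hA.integrable_abs_rpow (by linarith) (by linarith)).aestronglyMeasurable
      hY2.aestronglyMeasurable
  have hlinI : Integrable (fun ω => |A ω| ^ (p - 2) * A ω * Y ω) μ :=
    (hAY.comp hφ measurable_id).integrable_mul hφA hY1
  have hquadI : Integrable (fun ω => |A ω| ^ (p - 2) * Y ω ^ 2) μ :=
    (hAY.comp hψ (measurable_id.pow_const 2)).integrable_mul
      (hA.integrable_abs_rpow (by linarith) (by linarith)) hY2
  have hAp := hA.integrable_abs_rpow (by linarith) le_rfl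
  have hYp := hY.integrable_abs_rpow (by linarith) le_rfl
  have hmain : Integrable (fun ω => |A ω| ^ p + p * (|A ω| ^ (p - 2) * A ω * Y ω)) μ :=
    hAp.add (hlinI.const_mul p)
  have hrem : Integrable
      (fun ω => rpowRemainderConst p * (|A ω| ^ (p - 2) * Y ω ^ 2 + |Y ω| ^ p)) μ :=
    (hquadI.add hYp).const_mul _
  calc ∫ ω, |A ω + Y ω| ^ p ∂μ
      ≤ ∫ ω, (|A ω| ^ p + p * (|A ω| ^ (p - 2) * A ω * Y ω) +
          rpowRemainderConst p * (|A ω| ^ (p - 2) * Y ω ^ 2 + |Y ω| ^ p)) ∂μ :=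
        integral_mono ((hA.add hY).integrable_abs_rpow (by linarith) le_rfl) (hmain.add hrem)
          fun ω => abs_add_rpow_le hp _ _
    _ = _ := by
        rw [integral_add hmain hrem, integral_add hAp (hlinI.const_mul p), integral_const_mul,
          integral_const_mul, integral_add hquadI hYp, hquad, hlin, mul_zero, add_zero]

theorem integral_abs_sum_rpow_le {ι : Type*} (hp : 2 ≤ p) {X : ι → Ω → ℝ}
    (hX : ∀ i, Measurable (X i)) (hind : iIndepFun X μ)
    (hmem : ∀ i, MemLp (X i) (ENNReal.ofReal p) μ) (hmean : ∀ i, ∫ ω, X i ω ∂μ = 0)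
    {m : ℝ} (hm : ∀ i, ∫ ω, |X i ω| ^ p ∂μ ≤ m) (s : Finset ι) :
    ∫ ω, |∑ i ∈ s, X i ω| ^ p ∂μ ≤ (2 * rpowRemainderConst p * #s) ^ (p / 2) * m := by
  classical
  have hp0 : 0 < p := by linarith
  have hc := one_le_rpowRemainderConst hp
  induction s using Finset.induction_on with
  | empty => simp [Real.zero_rpow hp0.ne', Real.zero_rpow (half_pos hp0).ne']
  | insert a s ha ih =>
    have hA : MemLp (fun ω => ∑ i ∈ s, X i ω) (ENNReal.ofReal p) μ :=
      memLp_finsetSum s fun i _ => hmem i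
    have hAY : IndepFun (fun ω => ∑ i ∈ s, X i ω) (X a) μ := by
      simpa only [← Finset.sum_apply] using hind.indepFun_finsetSum_of_notMem hX ha
    have hcross : (∫ ω, |∑ i ∈ s, X i ω| ^ (p - 2) ∂μ) * ∫ ω, X a ω ^ 2 ∂μ ≤
        (∫ ω, |∑ i ∈ s, X i ω| ^ p ∂μ) ^ ((p - 2) / p) *
          (∫ ω, |X a ω| ^ p ∂μ) ^ (2 / p) := by
      have hY2 := integral_abs_rpow_le_integral_abs_rpow_rpow (hmem a) zero_le_two hp
      simp only [Real.rpow_two, sq_abs] at hY2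
      exact mul_le_mul (integral_abs_rpow_le_integral_abs_rpow_rpow hA (by linarith) (by linarith))
        hY2 (integral_nonneg fun ω => by positivity) (by positivity)
    calc ∫ ω, |∑ i ∈ insert a s, X i ω| ^ p ∂μ
        = ∫ ω, |(∑ i ∈ s, X i ω) + X a ω| ^ p ∂μ := by simp_rw [sum_insert ha, add_comm]
      _ ≤ _ := integral_abs_add_rpow_le_of_indepFun hp hA (hmem a) hAY (hmean a)
      _ ≤ ∫ ω, |∑ i ∈ s, X i ω| ^ p ∂μ + rpowRemainderConst p *
            ((∫ ω, |∑ i ∈ s, X i ω| ^ p ∂μ) ^ ((p - 2) / p) *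
              (∫ ω, |X a ω| ^ p ∂μ) ^ (2 / p) + ∫ ω, |X a ω| ^ p ∂μ) := by
          gcongr
      _ ≤ _ := by
          rw [card_insert_of_notMem ha, Nat.cast_succ]
          exact moment_bound_succ hp hc (integral_nonneg fun ω => by positivity) ih
            (integral_nonneg fun ω => by positivity) (hm a)

end

theorem bdg_sample_mean_moment (p : ℝ) (hp : 2 ≤ p) :
    ∃ C : ℝ, 0 < C ∧
      ∀ (Ω : Type) (_ : MeasureSpace Ω), IsProbabilityMeasure (ℙ : Measure Ω) →
      ∀ (N : ℕ) (hN : 0 < N) (X : Fin N → Ω → ℝ),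
        (∀ n, Measurable (X n)) →
        iIndepFun X ℙ →
        (∀ n, Measure.map (X n) ℙ = Measure.map (X ⟨0, hN⟩) ℙ) →
        MemLp (X ⟨0, hN⟩) (ENNReal.ofReal p) ℙ →
        (∫ ω, X ⟨0, hN⟩ ω ∂ℙ = 0) →
        ∫ ω, |(N : ℝ)⁻¹ * ∑ n, X n ω| ^ p ∂ℙ ≤
          C * (N : ℝ) ^ (-(p / 2)) * ∫ ω, |X ⟨0, hN⟩ ω| ^ p ∂ℙ := by
  have hc := one_le_rpowRemainderConst hp
  refine ⟨(2 * rpowRemainderConst p) ^ (p / 2), by positivity, ?_⟩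
  intro Ω _ _ N hN X hX hind hmap hmem hmean
  set m := ∫ ω, |X ⟨0, hN⟩ ω| ^ p ∂ℙ
  have hid : ∀ n, IdentDistrib (X n) (X ⟨0, hN⟩) :=
    fun n => ⟨(hX n).aemeasurable, (hX _).aemeasurable, hmap n⟩
  have hsum :
      ∫ ω, |∑ n, X n ω| ^ p ∂ℙ ≤ (2 * rpowRemainderConst p * N) ^ (p / 2) * m := by
    simpa using integral_abs_sum_rpow_le hp hX hind (fun n => (hid n).symm.memLp_snd hmem)
      (fun n => (hid n).integral_eq.trans hmean)
      (fun n => ((hid n).comp (by fun_prop : Measurable fun x : ℝ => |x| ^ p)).integral_eq.le)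
      univ
  have hNpos : (0 : ℝ) < N := by exact_mod_cast hN
  have hscale (ω : Ω) :
      |(N : ℝ)⁻¹ * ∑ n, X n ω| ^ p = (N : ℝ) ^ (-p) * |∑ n, X n ω| ^ p := by
    rw [abs_mul, Real.mul_rpow (by positivity) (abs_nonneg _), abs_of_pos (inv_pos.mpr hNpos),
      Real.inv_rpow hNpos.le, Real.rpow_neg hNpos.le]
  have hexp : (N : ℝ) ^ (-p) * (N : ℝ) ^ (p / 2) = (N : ℝ) ^ (-(p / 2)) := by
    rw [← Real.rpow_add hNpos]; ring_nf
  calc ∫ ω, |(N : ℝ)⁻¹ * ∑ n, X n ω| ^ p ∂ℙ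
      = (N : ℝ) ^ (-p) * ∫ ω, |∑ n, X n ω| ^ p ∂ℙ := by simp_rw [hscale, integral_const_mul]
    _ ≤ (N : ℝ) ^ (-p) * ((2 * rpowRemainderConst p * N) ^ (p / 2) * m) := by gcongr
    _ = (2 * rpowRemainderConst p) ^ (p / 2) * (N : ℝ) ^ (-(p / 2)) * m := by
        rw [Real.mul_rpow (by positivity) hNpos.le, ← hexp]
        ring
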